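/- Let Σ be a real symmetric positive definite matrix indexed by a finite set N. For every d ⊆ N and distinct i, k, h in N \ d: if σ_{ik|d} = 0 and σ_{ik|{h}∪d} = 0, then σ_{ih|d} = 0 or σ_{kh|d} = 0. In other words, every regular Gaussian distribution satisfies singleton transitivity. -/

import Mathlib

/-- The partial covariance `σ_{ik|d} = Σ_{ik} − Σ_{id} (Σ_{dd})⁻¹ Σ_{dk}`,
an entry of the Schur complement of the block `Σ_{dd}` (with `σ_{ik|∅} = Σ_{ik}`). -/
noncomputable def partialCov {N : Type} [Fintype N] [DecidableEq N]
    (S : Matrix N N ℝ) (d : Finset N) (i k : N) : ℝ :=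
  S i k - ∑ p : {x // x ∈ d}, ∑ q : {x // x ∈ d},
    S i p.1 * (Matrix.of fun p' q' : {x // x ∈ d} => S p'.1 q'.1)⁻¹ p q * S q.1 k

/-
For every `k`, any solution `w^k` of the normal equations `∑_{q ∈ d} Σ_{pq} w^k_q = Σ_{pk}`
(`p ∈ d`) gives `σ_{ik|d} = Σ_{ik} − ∑_{q ∈ d} Σ_{iq} w^k_q`; in particular `σ_{pk|d} = 0` for
`p ∈ d`. Hence `w^k + (σ_{hk|d} / σ_{hh|d}) (e_h − w^h)` solves the normal equations on `{h} ∪ d`,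
which yields the recursion
  `σ_{ik|{h}∪d} = σ_{ik|d} − σ_{ih|d} σ_{hk|d} / σ_{hh|d}`,
where `σ_{hh|d} > 0` is the value of the quadratic form of `Σ` at `e_h − w^h`. Under the two
hypotheses the recursion gives `σ_{ih|d} σ_{hk|d} = 0`, and `σ_{hk|d} = σ_{kh|d}` by symmetry.
-/

open Finset Matrix

lemma exists_forall_sum_eq {N R : Type*} [DecidableEq N] [CommRing R] {S : Matrix N N R}
    {d : Finset N} (hA : IsUnit (S.submatrix (↑) (↑) : Matrix d d R)) (c : N → R) :
    ∃ w : N → R, ∀ p ∈ d, ∑ q ∈ d, S p q * w q = c p := by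
  obtain ⟨v, hv⟩ := mulVec_surjective_iff_isUnit.mpr hA (fun p : d => c p)
  refine ⟨Function.extend Subtype.val v 0, fun p hp => ?_⟩
  rw [← sum_coe_sort d]
  simp only [Subtype.val_injective.extend_apply]
  exact congr_fun hv ⟨p, hp⟩

section PartialCov

variable {N : Type} [Fintype N] [DecidableEq N] {S : Matrix N N ℝ} {d : Finset N}

lemma partialCov_eq_sub_sum_submatrix_inv (S : Matrix N N ℝ) (d : Finset N) (i k : N) :
    partialCov S d i k =
      S i k - ∑ p : d, ∑ q : d, S i p * (S.submatrix (↑) (↑) : Matrix d d ℝ)⁻¹ p q * S q k :=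
  rfl

lemma partialCov_eq_sub_sum_of_forall_sum_eq (hA : IsUnit (S.submatrix (↑) (↑) : Matrix d d ℝ))
    {k : N} {w : N → ℝ} (hw : ∀ p ∈ d, ∑ q ∈ d, S p q * w q = S p k) (i : N) :
    partialCov S d i k = S i k - ∑ q ∈ d, S i q * w q := by
  set A : Matrix d d ℝ := S.submatrix (↑) (↑)
  have hAw : A *ᵥ (fun q : d => w q.1) = fun p => S p.1 k := funext fun p => by
    simp only [mulVec, dotProduct, A, submatrix_apply]
    rw [sum_coe_sort d (fun q => S p q * w q), hw p p.2]
  have hsol : A⁻¹ *ᵥ (fun p : d => S p.1 k) = fun q => w q.1 := by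
    rw [← hAw, mulVec_mulVec, nonsing_inv_mul _ ((isUnit_iff_isUnit_det A).mp hA), one_mulVec]
  rw [partialCov_eq_sub_sum_submatrix_inv, ← sum_coe_sort d (fun q => S i q * w q)]
  congr 1
  refine sum_congr rfl fun p _ => ?_
  rw [← congr_fun hsol p]
  simp only [mulVec, dotProduct, mul_sum, mul_assoc]
  rfl

lemma partialCov_eq_zero_of_mem (hA : IsUnit (S.submatrix (↑) (↑) : Matrix d d ℝ)) {a : N}
    (ha : a ∈ d) (k : N) : partialCov S d a k = 0 := by
  obtain ⟨w, hw⟩ := exists_forall_sum_eq hA (fun p => S p k)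
  rw [partialCov_eq_sub_sum_of_forall_sum_eq hA hw, hw a ha, sub_self]

lemma partialCov_self_pos (hS : S.PosDef) {h : N} (hh : h ∉ d) : 0 < partialCov S d h h := by
  have hA : IsUnit (S.submatrix (↑) (↑) : Matrix d d ℝ) :=
    (hS.submatrix Subtype.val_injective).isUnit
  obtain ⟨w, hw⟩ := exists_forall_sum_eq hA (fun p => S p h)
  set y : N → ℝ := fun a => (if a = h then 1 else 0) - if a ∈ d then w a else 0
  have hSy : S *ᵥ y = fun a => partialCov S d a h := funext fun a => by
    simp only [mulVec, dotProduct, y, mul_sub, mul_ite, mul_one, mul_zero, sum_sub_distrib,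
      sum_ite_eq', sum_ite_mem, mem_univ, if_true, univ_inter]
    rw [partialCov_eq_sub_sum_of_forall_sum_eq hA hw]
  have hy : y ≠ 0 := fun hy0 => by simpa [y, hh] using congr_fun hy0 h
  have hquad : star y ⬝ᵥ (S *ᵥ y) = partialCov S d h h := by
    simp only [hSy, star_trivial, dotProduct, y, sub_mul, ite_mul, one_mul, zero_mul,
      sum_sub_distrib, sum_ite_eq', sum_ite_mem, mem_univ, if_true, univ_inter]
    rw [sum_eq_zero fun a ha => by rw [partialCov_eq_zero_of_mem hA ha, mul_zero], sub_zero]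
  exact hquad ▸ hS.dotProduct_mulVec_pos hy

lemma partialCov_comm (hS : S.IsSymm) (d : Finset N) (i k : N) :
    partialCov S d i k = partialCov S d k i := by
  have hB := (hS.submatrix (Subtype.val : d → N)).inv
  rw [partialCov_eq_sub_sum_submatrix_inv, partialCov_eq_sub_sum_submatrix_inv, hS.apply k i,
    sum_comm]
  congr 1
  refine sum_congr rfl fun p _ => sum_congr rfl fun q _ => ?_
  rw [hS.apply q i, hS.apply k p, ← hB.apply p q]
  ring

lemma partialCov_insert (hA : IsUnit (S.submatrix (↑) (↑) : Matrix d d ℝ)) {h : N}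
    (hA' : IsUnit (S.submatrix (↑) (↑) : Matrix ↥(insert h d) ↥(insert h d) ℝ)) (hh : h ∉ d)
    (hs : partialCov S d h h ≠ 0) (i k : N) :
    partialCov S (insert h d) i k =
      partialCov S d i k - partialCov S d i h * partialCov S d h k / partialCov S d h h := by
  obtain ⟨u, hu⟩ := exists_forall_sum_eq hA (fun p => S p k)
  obtain ⟨v, hv⟩ := exists_forall_sum_eq hA (fun p => S p h)
  set c := partialCov S d h k / partialCov S d h h
  set w : N → ℝ := fun q => if q = h then c else u q - c * v q
  have hsum : ∀ a, ∑ q ∈ insert h d, S a q * w q =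
      S a k - partialCov S d a k + c * partialCov S d a h := by
    intro a
    have hd : ∑ q ∈ d, S a q * w q = ∑ q ∈ d, S a q * u q - c * ∑ q ∈ d, S a q * v q := by
      rw [mul_sum, ← sum_sub_distrib]
      refine sum_congr rfl fun q hq => ?_
      simp only [w, if_neg (ne_of_mem_of_not_mem hq hh)]
      ring
    rw [sum_insert hh, hd, partialCov_eq_sub_sum_of_forall_sum_eq hA hu,
      partialCov_eq_sub_sum_of_forall_sum_eq hA hv]
    simp only [w, if_pos rfl]
    ring
  have hw : ∀ p ∈ insert h d, ∑ q ∈ insert h d, S p q * w q = S p k := by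
    intro p hp
    rw [hsum]
    rcases mem_insert.mp hp with rfl | hp
    · simp only [c, div_mul_cancel₀ _ hs]
      ring
    · rw [partialCov_eq_zero_of_mem hA hp, partialCov_eq_zero_of_mem hA hp]
      ring
  rw [partialCov_eq_sub_sum_of_forall_sum_eq hA' hw, hsum]
  ring

end PartialCov

theorem gaussian_singleton_transitivity_general {N : Type} [Fintype N] [DecidableEq N]
    (S : Matrix N N ℝ) (hS : S.PosDef) (d : Finset N) (i k h : N)
    (hh : h ∉ d)
    (h1 : partialCov S d i k = 0) (h2 : partialCov S (insert h d) i k = 0) :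
    partialCov S d i h = 0 ∨ partialCov S d k h = 0 := by
  have hpos := partialCov_self_pos hS hh
  have hrec := partialCov_insert (hS.submatrix Subtype.val_injective).isUnit
    (hS.submatrix Subtype.val_injective).isUnit hh hpos.ne' i k
  rw [h1, h2, zero_sub, zero_eq_neg, div_eq_zero_iff, or_iff_left hpos.ne', mul_eq_zero] at hrec
  rwa [partialCov_comm (isHermitian_iff_isSymm.mp hS.isHermitian) d k h]

/-- **Singleton transitivity of regular Gaussian distributions.** For a real symmetric
positive definite matrix `Σ` indexed by a finite set `N`, every `d ⊆ N` and distinct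
`i, k, h ∈ N \ d`: if `σ_{ik|d} = 0` and `σ_{ik|{h}∪d} = 0`, then `σ_{ih|d} = 0` or
`σ_{kh|d} = 0`. -/
theorem gaussian_singleton_transitivity {N : Type} [Fintype N] [DecidableEq N]
    (S : Matrix N N ℝ) (hS : S.PosDef) (d : Finset N) (i k h : N)
    (hi : i ∉ d) (hk : k ∉ d) (hh : h ∉ d)
    (hik : i ≠ k) (hih : i ≠ h) (hkh : k ≠ h)
    (h1 : partialCov S d i k = 0) (h2 : partialCov S (insert h d) i k = 0) :
    partialCov S d i h = 0 ∨ partialCov S d k h = 0 :=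
  gaussian_singleton_transitivity_general S hS d i k h hh h1 h2
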